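/- arXiv:2310.20177 — 3 statements merged into one kernel-verified Lean document; each statement's English description precedes it below -/
import Mathlib

section
/- Let m ≥ 2 be an integer, β ∈ ℝ and B > 0. There exists a constant C > 0, depending only on m, β, Ω and B, such that for every positive even integer N, every trigonometric polynomial φ ∈ X_N with ‖φ‖_{H^m} ≤ B, and every 0 < τ < 1, one has ‖ φ·(e^{−iτβ|φ|²} − 1) ‖_{H^m} ≤ C τ. -/
open MeasureTheory
open scoped Real

noncomputable section

namespace GPE

/-- Frequencies μ_l = 2πl/(b−a). -/
def freq (a b : ℝ) (l : ℤ) : ℝ := 2 * Real.pi * l / (b - a)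

/-- The Fourier mode e^{iμ_l(x−a)}. -/
def eMode (a b : ℝ) (l : ℤ) (x : ℝ) : ℂ :=
  Complex.exp (Complex.I * ((freq a b l * (x - a) : ℝ) : ℂ))

/-- Index set 𝒯_N = {−N/2, …, N/2 − 1}. -/
def idxSet (N : ℕ) : Finset ℤ := Finset.Ico (-(N : ℤ) / 2) ((N : ℤ) / 2)

/-- l-th Fourier coefficient û_l = (1/(b−a)) ∫_a^b u(x) e^{−iμ_l(x−a)} dx. -/
def fourierCoeffOn (a b : ℝ) (u : ℝ → ℂ) (l : ℤ) : ℂ :=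
  ((b - a : ℝ) : ℂ)⁻¹ *
    ∫ x in a..b, u x * Complex.exp (-(Complex.I * ((freq a b l * (x - a) : ℝ) : ℂ)))

/-- L²-projection P_N u = Σ_{l∈𝒯_N} û_l e^{iμ_l(x−a)}. -/
def projN (a b : ℝ) (N : ℕ) (u : ℝ → ℂ) : ℝ → ℂ :=
  fun x => ∑ l ∈ idxSet N, fourierCoeffOn a b u l * eMode a b l x

/-- Grid points x_j = a + j(b−a)/N. -/
def gridPt (a b : ℝ) (N : ℕ) (j : ℕ) : ℝ := a + j * ((b - a) / N)

/-- Discrete Fourier coefficient ṽ_l = (1/N) Σ_{j=0}^{N−1} v(x_j) e^{−iμ_l(x_j−a)}. -/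
def discreteCoeff (a b : ℝ) (N : ℕ) (v : ℝ → ℂ) (l : ℤ) : ℂ :=
  (N : ℂ)⁻¹ * ∑ j ∈ Finset.range N,
    v (gridPt a b N j) * Complex.exp (-(Complex.I * ((freq a b l * (gridPt a b N j - a) : ℝ) : ℂ)))

/-- Trigonometric interpolation I_N v = Σ_{l∈𝒯_N} ṽ_l e^{iμ_l(x−a)}. -/
def interpN (a b : ℝ) (N : ℕ) (v : ℝ → ℂ) : ℝ → ℂ :=
  fun x => ∑ l ∈ idxSet N, discreteCoeff a b N v l * eMode a b l x

/-- The free Schrödinger flow composed with projection: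
 e^{isΔ} P_N u = Σ_{l∈𝒯_N} e^{−isμ_l²} û_l e^{iμ_l(x−a)}. -/
def freeFlow (a b : ℝ) (N : ℕ) (s : ℝ) (u : ℝ → ℂ) : ℝ → ℂ :=
  fun x => ∑ l ∈ idxSet N,
    Complex.exp (-(Complex.I * ((s * freq a b l ^ 2 : ℝ) : ℂ))) * fourierCoeffOn a b u l *
      eMode a b l x

/-- Membership in X_N = span{e^{iμ_l(x−a)} : l ∈ 𝒯_N}. -/
def MemXN (a b : ℝ) (N : ℕ) (φ : ℝ → ℂ) : Prop :=
  ∃ c : ℤ → ℂ, φ = fun x => ∑ l ∈ idxSet N, c l * eMode a b l x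

/-- The nonlinear-phase map φ ↦ φ e^{−iτβ|φ|²}. -/
def nlPhase (β τ : ℝ) (φ : ℝ → ℂ) : ℝ → ℂ :=
  fun x => φ x * Complex.exp (-(Complex.I * ((τ * β * ‖φ x‖ ^ 2 : ℝ) : ℂ)))

/-- The LTeFP numerical flow Φ_τ(φ) = e^{iτΔ} P_N( e^{−iτV} · I_N( φ e^{−iτβ|φ|²} ) ). -/
def PhiLTeFP (a b : ℝ) (N : ℕ) (V : ℝ → ℝ) (β τ : ℝ) (φ : ℝ → ℂ) : ℝ → ℂ :=
  freeFlow a b N τ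
    (fun x => Complex.exp (-(Complex.I * ((τ * V x : ℝ) : ℂ))) * interpN a b N (nlPhase β τ φ) x)

/-- The LTFS numerical flow S_τ(φ) = e^{iτΔ} P_N( e^{−iτ(V+β|φ|²)} φ ). -/
def SLTFS (a b : ℝ) (N : ℕ) (V : ℝ → ℝ) (β τ : ℝ) (φ : ℝ → ℂ) : ℝ → ℂ :=
  freeFlow a b N τ
    (fun x =>
      Complex.exp (-(Complex.I * ((τ * (V x + β * ‖φ x‖ ^ 2) : ℝ) : ℂ))) * φ x)

/-- The STeFP numerical flow: φ ↦ e^{i(τ/2)Δ} P_N( e^{−iτV} · I_N( φ₁ e^{−iτβ|φ₁|²} ) )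
with φ₁ = e^{i(τ/2)Δ} φ. -/
def PhiSTeFP (a b : ℝ) (N : ℕ) (V : ℝ → ℝ) (β τ : ℝ) (φ : ℝ → ℂ) : ℝ → ℂ :=
  freeFlow a b N (τ / 2)
    (fun x => Complex.exp (-(Complex.I * ((τ * V x : ℝ) : ℂ))) *
      interpN a b N (nlPhase β τ (freeFlow a b N (τ / 2) φ)) x)

/-- LTeFP iterates: I_N ψ̂⁰ = I_N ψ₀ and I_N ψ̂^{n+1} = Φ_τ(I_N ψ̂ⁿ). -/
def LTeFPiter (a b : ℝ) (N : ℕ) (V : ℝ → ℝ) (β τ : ℝ) (ψ0 : ℝ → ℂ) : ℕ → ℝ → ℂ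
  | 0 => interpN a b N ψ0
  | n + 1 => PhiLTeFP a b N V β τ (LTeFPiter a b N V β τ ψ0 n)

/-- STeFP iterates. -/
def STeFPiter (a b : ℝ) (N : ℕ) (V : ℝ → ℝ) (β τ : ℝ) (ψ0 : ℝ → ℂ) : ℕ → ℝ → ℂ
  | 0 => interpN a b N ψ0
  | n + 1 => PhiSTeFP a b N V β τ (STeFPiter a b N V β τ ψ0 n)

/-- Sobolev H^m norm on (a,b): ‖u‖_{H^m} = (Σ_{k≤m} ‖u^{(k)}‖²_{L²(a,b)})^{1/2}. -/
def sobNorm (a b : ℝ) (m : ℕ) (u : ℝ → ℂ) : ℝ :=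
  Real.sqrt (∑ k ∈ Finset.range (m + 1), ∫ x in a..b, ‖iteratedDeriv k u x‖ ^ 2)

/-- Periodic boundary conditions of order m: u^{(k)}(a) = u^{(k)}(b) for k = 0,…,m−1. -/
def PerBC (a b : ℝ) (m : ℕ) (u : ℝ → ℂ) : Prop :=
  ∀ k < m, iteratedDeriv k u a = iteratedDeriv k u b

/-- ψ (with time derivative ψt) solves the GPE i∂_tψ = −∂_x²ψ + Vψ + β|ψ|²ψ
on [0,T] × [a,b]. -/
def IsGPESolution (a b T : ℝ) (V : ℝ → ℝ) (β : ℝ) (ψ ψt : ℝ → ℝ → ℂ) : Prop :=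
  ∀ t ∈ Set.Icc 0 T, ∀ x ∈ Set.Icc a b,
    HasDerivAt (fun s => ψ s x) (ψt t x) t ∧
    Complex.I * ψt t x =
      -(iteratedDeriv 2 (ψ t) x) + ((V x + β * ‖ψ t x‖ ^ 2 : ℝ) : ℂ) * ψ t x

end GPE

/-!
On `[a, b]` the `H¹` norm controls the sup norm, so all derivatives of `φ` of order `< m` are
bounded pointwise by a constant depending only on `a`, `b`, `B`, while `φ⁽ᵐ⁾` is merely in `L²`.
We therefore track pointwise bounds `‖f⁽ᵏ⁾(x)‖ ≤ M ρ(k)` with `ρ(k) = 1` for `k < m` and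
`ρ(m) = 1 + ‖φ⁽ᵐ⁾(x)‖`; since `ρ(i) ρ(j) ≤ ρ(i + j)` for `i + j ≤ m`, the Leibniz rule preserves
such bounds. The phase `h = -iτβ φ φ̄` thus satisfies them with `M = O(τ)`, and because `e^h` has
modulus one and `(e^h)' = e^h h'`, an induction gives the same for `e^h - 1` (order zero by
`|e^{it} - 1| ≤ |t|`). One more Leibniz step bounds the derivatives of `φ (e^h - 1)` by
`Cτ (1 + ‖φ⁽ᵐ⁾‖)`, and squaring and integrating gives the `Hᵐ` bound.
-/

open intervalIntegral Set
open scoped ContDiff Interval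

theorem norm_iteratedDeriv_mul_le_two_pow_mul {𝕜 A : Type*} [NontriviallyNormedField 𝕜]
    [NormedRing A] [NormedAlgebra 𝕜 A] {f g : 𝕜 → A} (hf : ContDiff 𝕜 ∞ f)
    (hg : ContDiff 𝕜 ∞ g) (n : ℕ) (x : 𝕜) {T : ℝ}
    (hT : ∀ i ≤ n, ‖iteratedDeriv i f x‖ * ‖iteratedDeriv (n - i) g x‖ ≤ T) :
    ‖iteratedDeriv n (fun y => f y * g y) x‖ ≤ 2 ^ n * T := by
  have hleibniz := norm_iteratedFDeriv_mul_le hf hg x (n := n) (mod_cast le_top)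
  simp only [norm_iteratedFDeriv_eq_norm_iteratedDeriv, mul_assoc] at hleibniz
  calc _ ≤ _ := hleibniz
    _ ≤ ∑ i ∈ Finset.range (n + 1), (n.choose i : ℝ) * T := by
      gcongr with i hi
      exact hT i (Finset.mem_range_succ_iff.mp hi)
    _ = 2 ^ n * T := by
      rw [← Finset.sum_mul, ← Nat.cast_sum, Nat.sum_range_choose]
      push_cast
      ring

theorem norm_iteratedDeriv_succ_cexp_le_two_pow_mul {h : ℝ → ℂ} (hh : ContDiff ℝ ∞ h) (k : ℕ)
    (x : ℝ) {T : ℝ}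
    (hT : ∀ i ≤ k, ‖iteratedDeriv i (fun y => Complex.exp (h y)) x‖ *
      ‖iteratedDeriv (k + 1 - i) h x‖ ≤ T) :
    ‖iteratedDeriv (k + 1) (fun y => Complex.exp (h y)) x‖ ≤ 2 ^ k * T := by
  have hderiv : deriv (fun y => Complex.exp (h y)) = fun y => Complex.exp (h y) * deriv h y :=
    funext fun y => ((hh.differentiable (by simp)) y).hasDerivAt.cexp.deriv
  rw [iteratedDeriv_succ', hderiv]
  refine norm_iteratedDeriv_mul_le_two_pow_mul hh.cexp (contDiff_infty_iff_deriv.1 hh).2 k x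
    fun i hi => ?_
  rw [← iteratedDeriv_succ', show k - i + 1 = k + 1 - i by omega]
  exact hT i hi

theorem norm_cexp_sub_one_le_of_re_eq_zero {z : ℂ} (hz : z.re = 0) :
    ‖Complex.exp z - 1‖ ≤ ‖z‖ := by
  have hz_eq : z = Complex.I * (z.im : ℂ) := by
    conv_lhs => rw [← Complex.re_add_im z]
    simp [hz, mul_comm]
  rw [hz_eq]
  exact Real.norm_exp_I_mul_ofReal_sub_one_le.trans (by simp)

structure IsDerivWeight (m : ℕ) (ρ : ℕ → ℝ) : Prop where
  one_le : ∀ k, 1 ≤ ρ k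
  mul_le : ∀ i j, i + j ≤ m → ρ i * ρ j ≤ ρ (i + j)

theorem IsDerivWeight.mul_sub_le {m : ℕ} {ρ : ℕ → ℝ} (hρ : IsDerivWeight m ρ) {i n : ℕ}
    (hi : i ≤ n) (hn : n ≤ m) : ρ i * ρ (n - i) ≤ ρ n := by
  simpa [Nat.add_sub_cancel' hi] using hρ.mul_le i (n - i) (by omega)

def WeightedDerivBound {F : Type*} [NormedAddCommGroup F] [NormedSpace ℝ F] (m : ℕ)
    (ρ : ℕ → ℝ) (M : ℝ) (f : ℝ → F) (x : ℝ) : Prop :=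
  ∀ k ≤ m, ‖iteratedDeriv k f x‖ ≤ M * ρ k

namespace WeightedDerivBound

variable {m : ℕ} {ρ : ℕ → ℝ} {M M' x : ℝ}

theorem nonneg {F : Type*} [NormedAddCommGroup F] [NormedSpace ℝ F] {f : ℝ → F}
    (hρ : IsDerivWeight m ρ) (hf : WeightedDerivBound m ρ M f x) : 0 ≤ M :=
  nonneg_of_mul_nonneg_left ((norm_nonneg _).trans (hf 0 m.zero_le))
    (zero_lt_one.trans_le (hρ.one_le 0))

theorem mono {F : Type*} [NormedAddCommGroup F] [NormedSpace ℝ F] {f : ℝ → F}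
    (hρ : IsDerivWeight m ρ) (hf : WeightedDerivBound m ρ M f x) (hM : M ≤ M') :
    WeightedDerivBound m ρ M' f x := fun k hk =>
  (hf k hk).trans (mul_le_mul_of_nonneg_right hM (zero_le_one.trans (hρ.one_le k)))

theorem mul {A : Type*} [NormedRing A] [NormedAlgebra ℝ A] {f g : ℝ → A}
    (hρ : IsDerivWeight m ρ) (hf_smooth : ContDiff ℝ ∞ f) (hg_smooth : ContDiff ℝ ∞ g)
    (hf : WeightedDerivBound m ρ M f x) (hg : WeightedDerivBound m ρ M' g x) :
    WeightedDerivBound m ρ (2 ^ m * (M * M')) (fun y => f y * g y) x := by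
  intro k hk
  have hM := hf.nonneg hρ
  have hM' := hg.nonneg hρ
  have hterm : ∀ i ≤ k, ‖iteratedDeriv i f x‖ * ‖iteratedDeriv (k - i) g x‖ ≤ M * M' * ρ k := by
    intro i hi
    calc ‖iteratedDeriv i f x‖ * ‖iteratedDeriv (k - i) g x‖
        ≤ (M * ρ i) * (M' * ρ (k - i)) :=
          mul_le_mul (hf i (by omega)) (hg (k - i) (by omega)) (norm_nonneg _)
            ((norm_nonneg _).trans (hf i (by omega)))
      _ = M * M' * (ρ i * ρ (k - i)) := by ring
      _ ≤ M * M' * ρ k := by gcongr; exact hρ.mul_sub_le hi hk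
  calc _ ≤ 2 ^ k * (M * M' * ρ k) :=
        norm_iteratedDeriv_mul_le_two_pow_mul hf_smooth hg_smooth k x hterm
    _ ≤ 2 ^ m * (M * M') * ρ k := by
      rw [← mul_assoc]
      have := hρ.one_le k
      gcongr
      norm_num

theorem conj {f : ℝ → ℂ} (hf : WeightedDerivBound m ρ M f x) :
    WeightedDerivBound m ρ M (fun y => starRingEnd ℂ (f y)) x := fun k hk => by
  have hiso := Complex.conjLIE.norm_iteratedFDeriv_comp_left f x k
  simp only [norm_iteratedFDeriv_eq_norm_iteratedDeriv] at hiso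
  exact hiso.trans_le (hf k hk)

theorem const_mul {f : ℝ → ℂ} (c : ℂ) (hf : WeightedDerivBound m ρ M f x) :
    WeightedDerivBound m ρ (‖c‖ * M) (fun y => c * f y) x := fun k hk => by
  rw [iteratedDeriv_const_mul_field, norm_mul, mul_assoc]
  exact mul_le_mul_of_nonneg_left (hf k hk) (norm_nonneg c)

end WeightedDerivBound

section CExp

variable {m : ℕ} {ρ : ℕ → ℝ} {h : ℝ → ℂ} {x A : ℝ}

theorem norm_iteratedDeriv_cexp_le (hρ : IsDerivWeight m ρ) (hh : ContDiff ℝ ∞ h)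
    (hre : (h x).re ≤ 0) (hA : WeightedDerivBound m ρ A h x) :
    ∀ n ≤ m, ‖iteratedDeriv n (fun y => Complex.exp (h y)) x‖ ≤ (2 ^ m * (1 + A)) ^ n * ρ n := by
  set E := 2 ^ m * (1 + A) with hE_def
  have hA0 := hA.nonneg hρ
  have hE : 1 ≤ E := one_le_mul_of_one_le_of_one_le (one_le_pow₀ one_le_two) (by linarith)
  intro n
  induction n using Nat.strong_induction_on with
  | _ n ih =>
    intro hn
    rcases n with _ | k
    · simpa [Complex.norm_exp] using (Real.exp_le_one_iff.2 hre).trans (hρ.one_le 0)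
    refine (norm_iteratedDeriv_succ_cexp_le_two_pow_mul hh k x
      (T := E ^ k * A * ρ (k + 1)) fun i hi => ?_).trans ?_
    · have := hρ.one_le i
      have := hρ.one_le (k + 1 - i)
      calc _ ≤ (E ^ i * ρ i) * (A * ρ (k + 1 - i)) :=
            mul_le_mul (ih i (by omega) (by omega)) (hA _ (by omega)) (norm_nonneg _)
              (by positivity)
        _ = E ^ i * A * (ρ i * ρ (k + 1 - i)) := by ring
        _ ≤ E ^ k * A * ρ (k + 1) := by gcongr; exact hρ.mul_sub_le (by omega) hn
    · have h2A : (2 : ℝ) ^ k * A ≤ E := by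
        rw [hE_def]
        gcongr
        · norm_num
        · omega
        · linarith
      have := hρ.one_le (k + 1)
      calc 2 ^ k * (E ^ k * A * ρ (k + 1)) = (2 ^ k * A) * E ^ k * ρ (k + 1) := by ring
        _ ≤ E * E ^ k * ρ (k + 1) := by gcongr
        _ = E ^ (k + 1) * ρ (k + 1) := by ring

theorem WeightedDerivBound.cexp_sub_one {ε : ℝ} (hρ : IsDerivWeight m ρ) (hh : ContDiff ℝ ∞ h)
    (hre : (h x).re = 0) (hε0 : 0 < ε) (hε1 : ε ≤ 1) (hA : WeightedDerivBound m ρ (ε * A) h x) :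
    WeightedDerivBound m ρ (ε * (2 ^ m * (1 + A)) ^ (m + 1))
      (fun y => Complex.exp (h y) - 1) x := by
  set E := 2 ^ m * (1 + A) with hE_def
  have hA0 : 0 ≤ A := nonneg_of_mul_nonneg_right (hA.nonneg hρ) hε0
  have hE : 1 ≤ E := one_le_mul_of_one_le_of_one_le (one_le_pow₀ one_le_two) (by linarith)
  have h2A : ∀ k ≤ m, (2 : ℝ) ^ k * A ≤ E := fun k hk => by
    rw [hE_def]
    gcongr
    · norm_num
    · linarith
  have hexp := norm_iteratedDeriv_cexp_le hρ hh hre.le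
    (hA.mono hρ (mul_le_of_le_one_left hA0 hε1))
  intro n hn
  rcases n with _ | k
  · have := hρ.one_le 0
    calc ‖iteratedDeriv 0 (fun y => Complex.exp (h y) - 1) x‖ ≤ ‖h x‖ :=
          norm_cexp_sub_one_le_of_re_eq_zero hre
      _ ≤ ε * A * ρ 0 := hA 0 m.zero_le
      _ ≤ ε * (E * E ^ m) * ρ 0 := by
          gcongr
          calc A = 2 ^ 0 * A * 1 := by ring
            _ ≤ E * E ^ m := by gcongr; exacts [h2A 0 m.zero_le, one_le_pow₀ hE]
      _ = ε * E ^ (m + 1) * ρ 0 := by ring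
  have hderiv : deriv (fun y => Complex.exp (h y) - 1) = deriv (fun y => Complex.exp (h y)) :=
    funext fun y => deriv_sub_const _
  rw [iteratedDeriv_succ', hderiv, ← iteratedDeriv_succ']
  refine (norm_iteratedDeriv_succ_cexp_le_two_pow_mul hh k x
    (T := E ^ m * (ε * A) * ρ (k + 1)) fun i hi => ?_).trans ?_
  · have := hρ.one_le i
    have := hρ.one_le (k + 1 - i)
    calc _ ≤ (E ^ i * ρ i) * (ε * A * ρ (k + 1 - i)) :=
          mul_le_mul (hexp i (by omega)) (hA _ (by omega)) (norm_nonneg _) (by positivity)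
      _ = E ^ i * (ε * A) * (ρ i * ρ (k + 1 - i)) := by ring
      _ ≤ E ^ m * (ε * A) * ρ (k + 1) := by
          gcongr
          · omega
          · exact hρ.mul_sub_le (by omega) hn
  · have := hρ.one_le (k + 1)
    calc 2 ^ k * (E ^ m * (ε * A) * ρ (k + 1)) = ε * (2 ^ k * A) * E ^ m * ρ (k + 1) := by ring
      _ ≤ ε * E * E ^ m * ρ (k + 1) := by gcongr; exact h2A k (by omega)
      _ = ε * E ^ (m + 1) * ρ (k + 1) := by ring

end CExp

theorem WeightedDerivBound.mul_cexp_phase_sub_one {m : ℕ} {ρ : ℕ → ℝ} {φ : ℝ → ℂ} {x L τ : ℝ}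
    (hρ : IsDerivWeight m ρ) (hφ_smooth : ContDiff ℝ ∞ φ) (hφ : WeightedDerivBound m ρ L φ x)
    (β : ℝ) (hτ0 : 0 < τ) (hτ1 : τ ≤ 1) :
    WeightedDerivBound m ρ (τ * (2 ^ m * L * (2 ^ m * (1 + |β| * (2 ^ m * L ^ 2))) ^ (m + 1)))
      (fun y => φ y * (Complex.exp (-(Complex.I * ((τ * β * ‖φ y‖ ^ 2 : ℝ) : ℂ))) - 1)) x := by
  set c : ℂ := -(Complex.I * ((τ * β : ℝ) : ℂ))
  have hphase : ∀ y, -(Complex.I * ((τ * β * ‖φ y‖ ^ 2 : ℝ) : ℂ)) =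
      c * (φ y * starRingEnd ℂ (φ y)) := fun y => by
    rw [Complex.mul_conj, Complex.normSq_eq_norm_sq]
    push_cast [c]
    ring
  have hc : ‖c‖ = τ * |β| := by simp [c, abs_of_pos hτ0]
  have hconj_smooth : ContDiff ℝ ∞ fun y => starRingEnd ℂ (φ y) :=
    Complex.conjCLE.contDiff.comp hφ_smooth
  have hh_smooth : ContDiff ℝ ∞ fun y => c * (φ y * starRingEnd ℂ (φ y)) :=
    contDiff_const.mul (hφ_smooth.mul hconj_smooth)
  have hre : (c * (φ x * starRingEnd ℂ (φ x))).re = 0 := by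
    simp [c, Complex.mul_conj]
  have hh : WeightedDerivBound m ρ (τ * (|β| * (2 ^ m * L ^ 2)))
      (fun y => c * (φ y * starRingEnd ℂ (φ y))) x :=
    ((hφ.mul hρ hφ_smooth hconj_smooth hφ.conj).const_mul c).mono hρ
      (le_of_eq (by rw [hc]; ring))
  simp_rw [hphase]
  exact (hφ.mul hρ hφ_smooth (hh_smooth.cexp.sub contDiff_const)
    (hh.cexp_sub_one hρ hh_smooth hre hτ0 hτ1)).mono hρ (le_of_eq (by ring))

theorem contDiff_mul_cexp_phase_sub_one {φ : ℝ → ℂ} (hφ : ContDiff ℝ ∞ φ) (β τ : ℝ) :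
    ContDiff ℝ ∞
      (fun y => φ y * (Complex.exp (-(Complex.I * ((τ * β * ‖φ y‖ ^ 2 : ℝ) : ℂ))) - 1)) :=
  hφ.mul ((contDiff_const.mul (Complex.ofRealCLM.contDiff.comp
    (contDiff_const.mul ((contDiff_norm_sq ℝ).comp hφ)))).neg.cexp.sub contDiff_const)

def topOrderWeight (m : ℕ) (D : ℝ) (k : ℕ) : ℝ := if k < m then 1 else 1 + D

section TopOrderWeight

variable {m : ℕ} {D : ℝ}

theorem topOrderWeight_le (hD : 0 ≤ D) (k : ℕ) : topOrderWeight m D k ≤ 1 + D := by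
  unfold topOrderWeight; split_ifs <;> linarith

theorem isDerivWeight_topOrderWeight (hm : 0 < m) (hD : 0 ≤ D) :
    IsDerivWeight m (topOrderWeight m D) where
  one_le k := by unfold topOrderWeight; split_ifs <;> linarith
  mul_le i j hij := by
    unfold topOrderWeight
    split_ifs <;> first | omega | linarith

theorem weightedDerivBound_topOrderWeight {F : Type*} [NormedAddCommGroup F] [NormedSpace ℝ F]
    {f : ℝ → F} {x K : ℝ} (hK : 0 ≤ K) (hf : ∀ k < m, ‖iteratedDeriv k f x‖ ≤ K) :
    WeightedDerivBound m (topOrderWeight m ‖iteratedDeriv m f x‖) (K + 1) f x := by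
  intro k hk
  unfold topOrderWeight
  split_ifs with hkm
  · linarith [hf k hkm]
  · obtain rfl : k = m := by omega
    nlinarith [norm_nonneg (iteratedDeriv k f x)]

end TopOrderWeight

section Interval

variable {E : Type*} [NormedAddCommGroup E] {a b : ℝ}

theorem norm_le_integral_norm_div_add_integral_norm_deriv [NormedSpace ℝ E] [CompleteSpace E]
    {u u' : ℝ → E} {x : ℝ} (hab : a < b) (hu' : Continuous u') (hd : ∀ y, HasDerivAt u (u' y) y)
    (hx : x ∈ Icc a b) :
    ‖u x‖ ≤ (∫ y in a..b, ‖u y‖) / (b - a) + ∫ y in a..b, ‖u' y‖ := by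
  have hu : Continuous u := continuous_iff_continuousAt.2 fun y => (hd y).continuousAt
  obtain ⟨y, hy, hmin⟩ :=
    isCompact_Icc.exists_isMinOn (nonempty_Icc.2 hab.le) hu.norm.continuousOn
  have hy_le : ‖u y‖ ≤ (∫ t in a..b, ‖u t‖) / (b - a) := by
    rw [le_div_iff₀ (sub_pos.2 hab)]
    simpa [mul_comm] using integral_mono_on hab.le (intervalIntegrable_const (μ := volume))
      (hu.norm.intervalIntegrable a b) fun t ht => hmin ht
  have hftc : u x - u y = ∫ t in y..x, u' t :=
    (integral_eq_sub_of_hasDerivAt (fun t _ => hd t) (hu'.intervalIntegrable y x)).symm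
  have hsub : Ι y x ⊆ Ioc a b := by
    rw [← uIoc_of_le hab.le]
    exact uIoc_subset_uIoc_of_uIcc_subset_uIcc
      (uIcc_subset_uIcc (Icc_subset_uIcc hy) (Icc_subset_uIcc hx))
  have hvar : ‖u x - u y‖ ≤ ∫ t in a..b, ‖u' t‖ := by
    rw [hftc, integral_of_le hab.le]
    exact norm_integral_le_integral_norm_uIoc.trans <| setIntegral_mono_set
      (hu'.norm.integrableOn_Icc.mono_set Ioc_subset_Icc_self)
      (Filter.Eventually.of_forall fun t => norm_nonneg _) hsub.eventuallyLE
  calc ‖u x‖ ≤ ‖u y‖ + ‖u x - u y‖ := norm_le_insert' _ _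
    _ ≤ _ := add_le_add hy_le hvar

theorem integral_norm_le_of_integral_norm_sq_le {v : ℝ → E} {S : ℝ} (hab : a ≤ b)
    (hv : Continuous v) (hS : ∫ y in a..b, ‖v y‖ ^ 2 ≤ S) :
    ∫ y in a..b, ‖v y‖ ≤ ((b - a) + S) / 2 := by
  have hamgm : ∫ y in a..b, ‖v y‖ ≤ ∫ y in a..b, (1 + ‖v y‖ ^ 2) / 2 :=
    integral_mono_on hab (hv.norm.intervalIntegrable a b)
      ((by fun_prop : Continuous fun y => (1 + ‖v y‖ ^ 2) / 2).intervalIntegrable a b)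
      fun y _ => by nlinarith [sq_nonneg (‖v y‖ - 1)]
  have hv2 : IntervalIntegrable (fun y => ‖v y‖ ^ 2) volume a b :=
    (hv.norm.pow 2).intervalIntegrable a b
  rw [intervalIntegral.integral_div, integral_add intervalIntegrable_const hv2] at hamgm
  simp only [intervalIntegral.integral_const, smul_eq_mul, mul_one] at hamgm
  linarith

theorem norm_le_of_integral_norm_sq_le [NormedSpace ℝ E] [CompleteSpace E] {u u' : ℝ → E} {x S : ℝ}
    (hab : a < b) (hu' : Continuous u') (hd : ∀ y, HasDerivAt u (u' y) y) (hx : x ∈ Icc a b)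
    (hu_sq : ∫ y in a..b, ‖u y‖ ^ 2 ≤ S) (hu'_sq : ∫ y in a..b, ‖u' y‖ ^ 2 ≤ S) :
    ‖u x‖ ≤ ((b - a) + S) / 2 * ((b - a)⁻¹ + 1) := by
  have hu : Continuous u := continuous_iff_continuousAt.2 fun y => (hd y).continuousAt
  have hba : 0 < b - a := sub_pos.2 hab
  calc ‖u x‖ ≤ (∫ y in a..b, ‖u y‖) / (b - a) + ∫ y in a..b, ‖u' y‖ :=
        norm_le_integral_norm_div_add_integral_norm_deriv hab hu' hd hx
    _ ≤ ((b - a) + S) / 2 / (b - a) + ((b - a) + S) / 2 := by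
        gcongr
        · exact integral_norm_le_of_integral_norm_sq_le hab.le hu hu_sq
        · exact integral_norm_le_of_integral_norm_sq_le hab.le hu' hu'_sq
    _ = ((b - a) + S) / 2 * ((b - a)⁻¹ + 1) := by ring

theorem integral_norm_sq_le_of_norm_le_mul_one_add {f v : ℝ → E} {c : ℝ} (hab : a ≤ b)
    (hf : Continuous f) (hv : Continuous v) (hfv : ∀ x ∈ Icc a b, ‖f x‖ ≤ c * (1 + ‖v x‖)) :
    ∫ x in a..b, ‖f x‖ ^ 2 ≤ 2 * c ^ 2 * ((b - a) + ∫ x in a..b, ‖v x‖ ^ 2) := by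
  have hpt : ∀ x ∈ Icc a b, ‖f x‖ ^ 2 ≤ 2 * c ^ 2 * (1 + ‖v x‖ ^ 2) := fun x hx => by
    have h0 : 0 ≤ c * (1 + ‖v x‖) := (norm_nonneg _).trans (hfv x hx)
    calc ‖f x‖ ^ 2 ≤ (c * (1 + ‖v x‖)) ^ 2 := pow_le_pow_left₀ (norm_nonneg _) (hfv x hx) 2
      _ ≤ 2 * c ^ 2 * (1 + ‖v x‖ ^ 2) := by nlinarith [sq_nonneg (‖v x‖ - 1), sq_nonneg c]
  calc ∫ x in a..b, ‖f x‖ ^ 2 ≤ ∫ x in a..b, 2 * c ^ 2 * (1 + ‖v x‖ ^ 2) :=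
        integral_mono_on hab ((hf.norm.pow 2).intervalIntegrable a b)
          ((by fun_prop : Continuous fun x => 2 * c ^ 2 * (1 + ‖v x‖ ^ 2)).intervalIntegrable a b)
          hpt
    _ = 2 * c ^ 2 * ((b - a) + ∫ x in a..b, ‖v x‖ ^ 2) := by
        have hv2 : IntervalIntegrable (fun x => ‖v x‖ ^ 2) volume a b :=
          (hv.norm.pow 2).intervalIntegrable a b
        rw [intervalIntegral.integral_const_mul, integral_add intervalIntegrable_const hv2]
        simp

end Interval

namespace GPE

theorem MemXN.contDiff {a b : ℝ} {N : ℕ} {φ : ℝ → ℂ} (h : MemXN a b N φ) : ContDiff ℝ ∞ φ := by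
  obtain ⟨c, rfl⟩ := h
  have hofReal : ContDiff ℝ ∞ ((↑) : ℝ → ℂ) := Complex.ofRealCLM.contDiff
  exact ContDiff.sum fun l _ => contDiff_const.mul
    (contDiff_const.mul (hofReal.comp (by fun_prop))).cexp

variable {a b : ℝ} {m : ℕ} {u : ℝ → ℂ}

theorem integral_norm_iteratedDeriv_sq_le_of_sobNorm_le {B : ℝ} {k : ℕ} (hab : a ≤ b)
    (hu : sobNorm a b m u ≤ B) (hk : k ≤ m) :
    ∫ x in a..b, ‖iteratedDeriv k u x‖ ^ 2 ≤ B ^ 2 := by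
  have hnonneg : ∀ j, 0 ≤ ∫ x in a..b, ‖iteratedDeriv j u x‖ ^ 2 := fun j =>
    integral_nonneg hab fun x _ => sq_nonneg _
  exact (Finset.single_le_sum (fun j _ => hnonneg j) (Finset.mem_range_succ_iff.2 hk)).trans
    (Real.sqrt_le_iff.1 hu).2

theorem sobNorm_le_sqrt_of_forall_le {c : ℝ}
    (hu : ∀ k ≤ m, ∫ x in a..b, ‖iteratedDeriv k u x‖ ^ 2 ≤ c) :
    sobNorm a b m u ≤ √((m + 1) * c) := by
  refine Real.sqrt_le_sqrt ((Finset.sum_le_sum fun k hk =>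
    hu k (Finset.mem_range_succ_iff.1 hk)).trans (le_of_eq ?_))
  simp

theorem norm_iteratedDeriv_le_of_sobNorm_le {B : ℝ} {k : ℕ} {x : ℝ} (hab : a < b)
    (hu : ContDiff ℝ ∞ u) (huB : sobNorm a b m u ≤ B) (hk : k < m) (hx : x ∈ Icc a b) :
    ‖iteratedDeriv k u x‖ ≤ ((b - a) + B ^ 2) / 2 * ((b - a)⁻¹ + 1) := by
  have hderiv : ∀ y, HasDerivAt (iteratedDeriv k u) (iteratedDeriv (k + 1) u y) y := fun y => by
    rw [iteratedDeriv_succ]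
    exact ((hu.differentiable_iteratedDeriv k (mod_cast ENat.natCast_lt_top k)) y).hasDerivAt
  exact norm_le_of_integral_norm_sq_le hab (hu.continuous_iteratedDeriv _ (mod_cast le_top))
    hderiv hx (integral_norm_iteratedDeriv_sq_le_of_sobNorm_le hab.le huB hk.le)
    (integral_norm_iteratedDeriv_sq_le_of_sobNorm_le hab.le huB hk)

theorem sobNorm_le_of_norm_iteratedDeriv_le_mul_one_add {v : ℝ → ℂ} {B c : ℝ} (hab : a ≤ b)
    (hu : ContDiff ℝ ∞ u) (hv : ContDiff ℝ ∞ v) (hvB : sobNorm a b m v ≤ B) (hc : 0 ≤ c)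
    (huv : ∀ k ≤ m, ∀ x ∈ Icc a b, ‖iteratedDeriv k u x‖ ≤ c * (1 + ‖iteratedDeriv m v x‖)) :
    sobNorm a b m u ≤ c * √(2 * (m + 1) * ((b - a) + B ^ 2)) := by
  have hL2 : ∀ k ≤ m, ∫ x in a..b, ‖iteratedDeriv k u x‖ ^ 2 ≤ 2 * c ^ 2 * ((b - a) + B ^ 2) :=
    fun k hk => (integral_norm_sq_le_of_norm_le_mul_one_add hab
      (hu.continuous_iteratedDeriv k (mod_cast le_top))
      (hv.continuous_iteratedDeriv m (mod_cast le_top)) (huv k hk)).trans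
      (by gcongr; exact integral_norm_iteratedDeriv_sq_le_of_sobNorm_le hab hvB le_rfl)
  calc sobNorm a b m u ≤ √((m + 1) * (2 * c ^ 2 * ((b - a) + B ^ 2))) :=
        sobNorm_le_sqrt_of_forall_le hL2
    _ = √(c ^ 2 * (2 * (m + 1) * ((b - a) + B ^ 2))) := by ring_nf
    _ = c * √(2 * (m + 1) * ((b - a) + B ^ 2)) := by
        rw [Real.sqrt_mul (sq_nonneg _), Real.sqrt_sq hc]

end GPE

open GPE in
theorem nonlinear_phase_Hm_bound_general
    (a b : ℝ) (hab : a < b) (m : ℕ) (hm : 2 ≤ m) (β B : ℝ) :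
    ∃ C > (0 : ℝ), ∀ N : ℕ, 0 < N → Even N →
      ∀ φ : ℝ → ℂ, MemXN a b N φ → sobNorm a b m φ ≤ B →
      ∀ τ : ℝ, 0 < τ → τ < 1 →
        sobNorm a b m
          (fun x => φ x *
            (Complex.exp (-(Complex.I * ((τ * β * ‖φ x‖ ^ 2 : ℝ) : ℂ))) - 1))
          ≤ C * τ := by
  have hba : 0 < b - a := sub_pos.2 hab
  set K := ((b - a) + B ^ 2) / 2 * ((b - a)⁻¹ + 1)
  have hK : 0 ≤ K := by positivity
  set C₀ := 2 ^ m * (K + 1) * (2 ^ m * (1 + |β| * (2 ^ m * (K + 1) ^ 2))) ^ (m + 1)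
  refine ⟨C₀ * √(2 * (m + 1) * ((b - a) + B ^ 2)), by positivity, ?_⟩
  intro N _ _ φ hφ hφB τ hτ0 hτ1
  have hφ_smooth := hφ.contDiff
  rw [mul_right_comm, mul_comm C₀]
  refine sobNorm_le_of_norm_iteratedDeriv_le_mul_one_add hab.le
    (contDiff_mul_cexp_phase_sub_one hφ_smooth β τ) hφ_smooth hφB (by positivity)
    fun k hk x hx => ?_
  have hD := norm_nonneg (iteratedDeriv m φ x)
  have hρ := isDerivWeight_topOrderWeight (by omega : 0 < m) hD
  have hφx := weightedDerivBound_topOrderWeight hK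
    fun j hj => norm_iteratedDeriv_le_of_sobNorm_le hab hφ_smooth hφB hj hx
  refine (hφx.mul_cexp_phase_sub_one hρ hφ_smooth β hτ0 hτ1.le k hk).trans ?_
  gcongr
  exact topOrderWeight_le hD k

open GPE in
/-- H^m bound for φ(e^{−iτβ|φ|²} − 1): for trigonometric polynomials φ with
‖φ‖_{H^m} ≤ B and 0 < τ < 1, one has ‖φ(e^{−iτβ|φ|²} − 1)‖_{H^m} ≤ Cτ with C
depending only on m, β, Ω = (a,b) and B. -/
theorem nonlinear_phase_Hm_bound
    (a b : ℝ) (hab : a < b) (m : ℕ) (hm : 2 ≤ m) (β B : ℝ) (hB : 0 < B) :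
    ∃ C > (0 : ℝ), ∀ N : ℕ, 0 < N → Even N →
      ∀ φ : ℝ → ℂ, MemXN a b N φ → sobNorm a b m φ ≤ B →
      ∀ τ : ℝ, 0 < τ → τ < 1 →
        sobNorm a b m
          (fun x => φ x *
            (Complex.exp (-(Complex.I * ((τ * β * ‖φ x‖ ^ 2 : ℝ) : ℂ))) - 1))
          ≤ C * τ :=
  nonlinear_phase_Hm_bound_general a b hab m hm β B
end
end

section
/- Let V be any real-valued measurable function on Ω, β ∈ ℝ and M > 0. There exists a constant C > 0, depending only on β and M, such that for every positive even integer N, every τ > 0, and all v, w ∈ X_N with ‖v‖_{L^∞(Ω)} ≤ M and ‖w‖_{L^∞(Ω)} ≤ M, one has ‖ Φ_τ(v) − Φ_τ(w) ‖_{L²(Ω)} ≤ (1 + Cτ) ‖ v − w ‖_{L²(Ω)}. -/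
open MeasureTheory
open scoped Real

noncomputable section

/-!
`Φ_τ` is a composition of four maps, each controlled in `L²`. The filter `e^{iτΔ} P_N` is an
`L²`-contraction (Bessel's inequality; its phases are unimodular) and multiplication by `e^{-iτV}`
is an isometry. The interpolant `I_N g` has `L²` norm equal to the discrete norm
`h Σ_j |g(x_j)|²` of the grid values of `g` (discrete orthogonality of the modes on the grid), and
on the grid the map `z ↦ z e^{-iτβ|z|²}` is `(1 + 2|β|M²τ)`-Lipschitz on the disc of radius `M`.
Finally `I_N` reproduces `X_N`, so for `v - w ∈ X_N` the discrete norm is again the `L²` norm.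
-/

open Finset ComplexConjugate
open Complex (I exp)

section RootsOfUnity

variable {ζ : ℂ} {N : ℕ}

lemma IsPrimitiveRoot.sum_range_zpow_mul (hζ : IsPrimitiveRoot ζ N) (d : ℤ) :
    ∑ j ∈ range N, ζ ^ (d * j) = if (N : ℤ) ∣ d then (N : ℂ) else 0 := by
  simp only [zpow_mul, zpow_natCast]
  split_ifs with hd
  · simp [(hζ.zpow_eq_one_iff_dvd d).2 hd]
  · have hN1 : (ζ ^ d) ^ N = 1 := by
      rw [← zpow_natCast, ← zpow_mul, mul_comm, zpow_mul, hζ.zpow_eq_one, one_zpow]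
    rw [geom_sum_eq (mt (hζ.zpow_eq_one_iff_dvd d).1 hd), hN1, sub_self, zero_div]

lemma IsPrimitiveRoot.sum_Ico_zpow_mul (hζ : IsPrimitiveRoot ζ N) (d m : ℤ) :
    ∑ n ∈ Ico m (m + N), ζ ^ (d * n) = if (N : ℤ) ∣ d then (N : ℂ) else 0 := by
  rcases N.eq_zero_or_pos with rfl | hN
  · simp
  have hshift : ∀ j : ℕ, ζ ^ (d * (m + j)) = ζ ^ (d * m) * ζ ^ (d * j) := fun j => by
    rw [mul_add, zpow_add₀ (hζ.ne_zero hN.ne')]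
  rw [Int.Ico_eq_finset_map, sum_map]
  simp only [add_sub_cancel_left, Int.toNat_natCast, Function.Embedding.trans_apply,
    Nat.castEmbedding_apply, addLeftEmbedding_apply, hshift, ← mul_sum, hζ.sum_range_zpow_mul]
  split_ifs with hd
  · rw [(hζ.zpow_eq_one_iff_dvd _).2 (hd.mul_right m), one_mul]
  · rw [mul_zero]

end RootsOfUnity

lemma norm_exp_neg_I_mul_ofReal (r : ℝ) : ‖exp (-(I * r))‖ = 1 := by
  simp [Complex.norm_exp]

lemma norm_exp_neg_I_mul_ofReal_sub_le (s t : ℝ) :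
    ‖exp (-(I * s)) - exp (-(I * t))‖ ≤ |s - t| := by
  have hfactor : exp (-(I * s)) - exp (-(I * t)) = -exp (-(I * s)) * (exp (I * ↑(s - t)) - 1) := by
    rw [neg_mul, mul_sub, ← Complex.exp_add, mul_one]
    push_cast
    ring_nf
  rw [hfactor, norm_mul, norm_neg, norm_exp_neg_I_mul_ofReal, one_mul, ← Real.norm_eq_abs]
  exact Real.norm_exp_I_mul_ofReal_sub_one_le

namespace GPE

def trigPoly (a b : ℝ) (N : ℕ) (c : ℤ → ℂ) (x : ℝ) : ℂ :=
  ∑ l ∈ idxSet N, c l * eMode a b l x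

def discreteNormSq (a b : ℝ) (N : ℕ) (g : ℝ → ℂ) : ℝ :=
  (b - a) / N * ∑ j ∈ range N, ‖g (gridPt a b N j)‖ ^ 2

variable {a b : ℝ} {N : ℕ}

-- `ℤ` division rounds down, so this holds for odd `N` as well.
lemma idxSet_eq_Ico : idxSet N = Ico (-(N : ℤ) / 2) (-(N : ℤ) / 2 + N) := by
  unfold idxSet
  congr 1
  omega

lemma eq_of_mem_idxSet_of_dvd_sub {l m : ℤ} (hl : l ∈ idxSet N) (hm : m ∈ idxSet N)
    (hdvd : (N : ℤ) ∣ l - m) : l = m := by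
  rw [idxSet_eq_Ico, mem_Ico] at hl hm
  have := Int.eq_zero_of_abs_lt_dvd hdvd (abs_lt.2 ⟨by omega, by omega⟩)
  omega

lemma exp_neg_eq_conj_eMode (l : ℤ) (x : ℝ) :
    exp (-(I * ((freq a b l * (x - a) : ℝ) : ℂ))) = conj (eMode a b l x) := by
  rw [eMode, ← Complex.exp_conj, map_mul, Complex.conj_I, Complex.conj_ofReal, neg_mul]

lemma conj_eMode (l : ℤ) (x : ℝ) : conj (eMode a b l x) = eMode a b (-l) x := by
  rw [← exp_neg_eq_conj_eMode, eMode, freq, freq]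
  push_cast
  ring_nf

lemma eMode_mul_eMode (l m : ℤ) (x : ℝ) :
    eMode a b l x * eMode a b m x = eMode a b (l + m) x := by
  rw [eMode, eMode, eMode, ← Complex.exp_add, freq, freq, freq]
  push_cast
  ring_nf

@[fun_prop]
lemma continuous_eMode (l : ℤ) : Continuous (eMode a b l) := by
  unfold eMode
  fun_prop

lemma eMode_gridPt (hab : a < b) (hN : N ≠ 0) (l : ℤ) (j : ℕ) :
    eMode a b l (gridPt a b N j) = exp (2 * π * I / N) ^ (l * j) := by
  have hba : (b : ℂ) - a ≠ 0 := sub_ne_zero.2 (by exact_mod_cast hab.ne')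
  rw [← Complex.exp_int_mul, eMode, freq, gridPt]
  congr 1
  push_cast
  field_simp
  ring

lemma integral_eMode (hab : a < b) (l : ℤ) :
    ∫ x in a..b, eMode a b l x = if l = 0 then ((b - a : ℝ) : ℂ) else 0 := by
  split_ifs with hl
  · simp [hl, eMode, freq]
  have hfreq : freq a b l ≠ 0 :=
    div_ne_zero (mul_ne_zero (mul_ne_zero two_ne_zero Real.pi_ne_zero) (Int.cast_ne_zero.2 hl))
      (sub_pos.2 hab).ne'
  have hc : I * (freq a b l : ℂ) ≠ 0 :=
    mul_ne_zero Complex.I_ne_zero (Complex.ofReal_ne_zero.2 hfreq)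
  have hperiod : I * (freq a b l : ℂ) * ((b - a : ℝ) : ℂ) = l * (2 * π * I) := by
    have : freq a b l * (b - a) = 2 * π * l := by
      unfold freq
      field_simp [(sub_pos.2 hab).ne']
    rw [mul_assoc, ← Complex.ofReal_mul, this]
    push_cast
    ring
  simp only [eMode, Complex.ofReal_mul, ← mul_assoc]
  rw [intervalIntegral.integral_comp_sub_right (fun y => exp (I * (freq a b l : ℂ) * y)),
    integral_exp_mul_complex hc, sub_self, Complex.ofReal_zero, mul_zero, Complex.exp_zero]
  rw [hperiod, Complex.exp_int_mul_two_pi_mul_I, sub_self, zero_div]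

lemma integral_eMode_mul_conj_eMode (hab : a < b) (l m : ℤ) :
    ∫ x in a..b, eMode a b l x * conj (eMode a b m x) = if l = m then ((b - a : ℝ) : ℂ) else 0 := by
  simp only [conj_eMode, eMode_mul_eMode, ← sub_eq_add_neg, integral_eMode hab, sub_eq_zero]

lemma sum_range_eMode_mul_conj_eMode (hab : a < b) (hN : N ≠ 0) {l m : ℤ} (hl : l ∈ idxSet N)
    (hm : m ∈ idxSet N) :
    ∑ j ∈ range N, eMode a b l (gridPt a b N j) * conj (eMode a b m (gridPt a b N j))
      = if l = m then (N : ℂ) else 0 := by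
  have hterm : ∀ j : ℕ, eMode a b l (gridPt a b N j) * conj (eMode a b m (gridPt a b N j))
      = exp (2 * π * I / N) ^ ((l - m) * j) := fun j => by
    rw [conj_eMode, eMode_mul_eMode, eMode_gridPt hab hN, sub_eq_add_neg]
  simp only [hterm, (Complex.isPrimitiveRoot_exp N hN).sum_range_zpow_mul]
  congr 1
  exact propext ⟨eq_of_mem_idxSet_of_dvd_sub hl hm, fun h => h ▸ by simp⟩

lemma sum_idxSet_eMode_mul_conj_eMode (hab : a < b) (hN : N ≠ 0) {j k : ℕ} (hj : j < N)
    (hk : k < N) :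
    ∑ l ∈ idxSet N, eMode a b l (gridPt a b N j) * conj (eMode a b l (gridPt a b N k))
      = if j = k then (N : ℂ) else 0 := by
  have hterm : ∀ l : ℤ, eMode a b l (gridPt a b N j) * conj (eMode a b l (gridPt a b N k))
      = exp (2 * π * I / N) ^ (((j : ℤ) - k) * l) := fun l => by
    rw [conj_eMode, eMode_gridPt hab hN, eMode_gridPt hab hN,
      ← zpow_add₀ (Complex.exp_ne_zero _)]
    ring_nf
  simp only [hterm, idxSet_eq_Ico, (Complex.isPrimitiveRoot_exp N hN).sum_Ico_zpow_mul]
  congr 1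
  refine propext ⟨fun h => ?_, fun h => h ▸ by simp⟩
  have := Int.eq_zero_of_abs_lt_dvd h (abs_lt.2 ⟨by omega, by omega⟩)
  omega

@[fun_prop]
lemma continuous_trigPoly (c : ℤ → ℂ) : Continuous (trigPoly a b N c) := by
  unfold trigPoly
  fun_prop

lemma interpN_eq_trigPoly (g : ℝ → ℂ) :
    interpN a b N g = trigPoly a b N (discreteCoeff a b N g) := rfl

lemma freeFlow_eq_trigPoly (s : ℝ) (u : ℝ → ℂ) :
    freeFlow a b N s u
      = trigPoly a b N
          (fun l => exp (-(I * ((s * freq a b l ^ 2 : ℝ) : ℂ))) * fourierCoeffOn a b u l) :=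
  rfl

@[fun_prop]
lemma continuous_interpN (g : ℝ → ℂ) : Continuous (interpN a b N g) :=
  continuous_trigPoly _

lemma sum_range_mul_conj_trigPoly (hN : N ≠ 0) (g : ℝ → ℂ) (c : ℤ → ℂ) :
    ∑ j ∈ range N, g (gridPt a b N j) * conj (trigPoly a b N c (gridPt a b N j))
      = N * ∑ l ∈ idxSet N, discreteCoeff a b N g l * conj (c l) := by
  have hN' : (N : ℂ) ≠ 0 := Nat.cast_ne_zero.2 hN
  simp only [trigPoly, discreteCoeff, exp_neg_eq_conj_eMode, map_sum, map_mul, mul_sum, sum_mul]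
  rw [sum_comm]
  refine sum_congr rfl fun l _ => sum_congr rfl fun j _ => ?_
  field_simp

lemma integral_mul_conj_trigPoly (hab : a < b) {g : ℝ → ℂ} (hg : IntervalIntegrable g volume a b)
    (c : ℤ → ℂ) :
    ∫ x in a..b, g x * conj (trigPoly a b N c x)
      = (b - a : ℝ) * ∑ l ∈ idxSet N, fourierCoeffOn a b g l * conj (c l) := by
  have hba : ((b - a : ℝ) : ℂ) ≠ 0 := by exact_mod_cast (sub_pos.2 hab).ne'
  simp only [trigPoly, fourierCoeffOn, exp_neg_eq_conj_eMode, map_sum, map_mul, mul_sum,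
    ← mul_assoc, mul_inv_cancel₀ hba, one_mul]
  rw [intervalIntegral.integral_finsetSum fun l _ =>
    (hg.mul_continuousOn (by fun_prop)).mul_continuousOn (by fun_prop)]
  refine sum_congr rfl fun l _ => ?_
  rw [← intervalIntegral.integral_mul_const]
  exact intervalIntegral.integral_congr fun x _ => by ring

lemma discreteCoeff_trigPoly (hab : a < b) (hN : N ≠ 0) (c : ℤ → ℂ) {l : ℤ}
    (hl : l ∈ idxSet N) : discreteCoeff a b N (trigPoly a b N c) l = c l := by
  have hN' : (N : ℂ) ≠ 0 := Nat.cast_ne_zero.2 hN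
  have hswap : ∑ j ∈ range N, (∑ m ∈ idxSet N, c m * eMode a b m (gridPt a b N j))
        * conj (eMode a b l (gridPt a b N j))
      = ∑ m ∈ idxSet N, c m * if m = l then (N : ℂ) else 0 := by
    simp only [sum_mul, mul_assoc]
    rw [sum_comm]
    exact sum_congr rfl fun m hm => by rw [← mul_sum, sum_range_eMode_mul_conj_eMode hab hN hm hl]
  rw [discreteCoeff]
  simp only [exp_neg_eq_conj_eMode, trigPoly, hswap, mul_ite, mul_zero, sum_ite_eq', if_pos hl]
  field_simp

lemma fourierCoeffOn_trigPoly (hab : a < b) (c : ℤ → ℂ) {l : ℤ} (hl : l ∈ idxSet N) :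
    fourierCoeffOn a b (trigPoly a b N c) l = c l := by
  have hba : ((b - a : ℝ) : ℂ) ≠ 0 := by exact_mod_cast (sub_pos.2 hab).ne'
  have hswap : ∫ x in a..b, (∑ m ∈ idxSet N, c m * eMode a b m x) * conj (eMode a b l x)
      = ∑ m ∈ idxSet N, c m * if m = l then ((b - a : ℝ) : ℂ) else 0 := by
    simp only [sum_mul, mul_assoc]
    rw [intervalIntegral.integral_finsetSum fun m _ =>
      Continuous.intervalIntegrable (by fun_prop) _ _]
    exact sum_congr rfl fun m _ => by
      rw [intervalIntegral.integral_const_mul, integral_eMode_mul_conj_eMode hab]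
  rw [fourierCoeffOn]
  simp only [exp_neg_eq_conj_eMode, trigPoly, hswap, mul_ite, mul_zero, sum_ite_eq', if_pos hl]
  field_simp

lemma interpN_gridPt (hab : a < b) (hN : N ≠ 0) (g : ℝ → ℂ) {j : ℕ} (hj : j < N) :
    interpN a b N g (gridPt a b N j) = g (gridPt a b N j) := by
  have hN' : (N : ℂ) ≠ 0 := Nat.cast_ne_zero.2 hN
  have hswap : ∑ l ∈ idxSet N,
        (∑ k ∈ range N, g (gridPt a b N k) * conj (eMode a b l (gridPt a b N k)))
          * eMode a b l (gridPt a b N j)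
      = ∑ k ∈ range N, g (gridPt a b N k) * if j = k then (N : ℂ) else 0 := by
    simp only [sum_mul, mul_assoc]
    rw [sum_comm]
    refine sum_congr rfl fun k hk => ?_
    rw [← mul_sum, ← sum_idxSet_eMode_mul_conj_eMode hab hN hj (mem_range.1 hk)]
    exact congrArg _ (sum_congr rfl fun l _ => mul_comm _ _)
  simp only [interpN, discreteCoeff, exp_neg_eq_conj_eMode, mul_assoc, ← mul_sum]
  simp only [hswap, mul_ite, mul_zero]
  rw [sum_ite_eq, if_pos (mem_range.2 hj)]
  field_simp

lemma MemXN.interpN_eq (hab : a < b) (hN : N ≠ 0) {φ : ℝ → ℂ} (hφ : MemXN a b N φ) :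
    interpN a b N φ = φ := by
  obtain ⟨c, rfl⟩ := hφ
  funext x
  change trigPoly a b N (discreteCoeff a b N (trigPoly a b N c)) x = trigPoly a b N c x
  exact sum_congr rfl fun l hl => by rw [discreteCoeff_trigPoly hab hN c hl]

lemma integral_norm_sq_trigPoly (hab : a < b) (c : ℤ → ℂ) :
    ∫ x in a..b, ‖trigPoly a b N c x‖ ^ 2 = (b - a) * ∑ l ∈ idxSet N, ‖c l‖ ^ 2 := by
  apply Complex.ofReal_injective
  rw [← intervalIntegral.integral_ofReal]
  simp only [Complex.ofReal_pow, ← Complex.mul_conj', integral_mul_conj_trigPoly hab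
    ((continuous_trigPoly c).intervalIntegrable _ _)]
  push_cast
  congr 1
  exact sum_congr rfl fun l hl => by rw [fourierCoeffOn_trigPoly hab c hl, Complex.mul_conj']

lemma sum_norm_sq_discreteCoeff (hab : a < b) (hN : N ≠ 0) (g : ℝ → ℂ) :
    ∑ l ∈ idxSet N, ‖discreteCoeff a b N g l‖ ^ 2
      = (N : ℝ)⁻¹ * ∑ j ∈ range N, ‖g (gridPt a b N j)‖ ^ 2 := by
  have hN' : (N : ℂ) ≠ 0 := Nat.cast_ne_zero.2 hN
  have hpair : ∑ j ∈ range N, g (gridPt a b N j) * conj (g (gridPt a b N j))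
      = N * ∑ l ∈ idxSet N, discreteCoeff a b N g l * conj (discreteCoeff a b N g l) := by
    rw [← sum_range_mul_conj_trigPoly hN]
    exact sum_congr rfl fun j hj =>
      congrArg (fun z => g _ * conj z) (interpN_gridPt hab hN g (mem_range.1 hj)).symm
  apply Complex.ofReal_injective
  push_cast
  simp only [← Complex.mul_conj', hpair]
  field_simp

lemma integral_norm_sq_interpN (hab : a < b) (hN : N ≠ 0) (g : ℝ → ℂ) :
    ∫ x in a..b, ‖interpN a b N g x‖ ^ 2 = discreteNormSq a b N g := by
  rw [interpN_eq_trigPoly, integral_norm_sq_trigPoly hab, sum_norm_sq_discreteCoeff hab hN,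
    discreteNormSq, div_eq_mul_inv, mul_assoc]

lemma MemXN.integral_norm_sq (hab : a < b) (hN : N ≠ 0) {φ : ℝ → ℂ} (hφ : MemXN a b N φ) :
    ∫ x in a..b, ‖φ x‖ ^ 2 = discreteNormSq a b N φ := by
  rw [← integral_norm_sq_interpN hab hN, hφ.interpN_eq hab hN]

lemma MemXN.sub {φ ψ : ℝ → ℂ} (hφ : MemXN a b N φ) (hψ : MemXN a b N ψ) :
    MemXN a b N (fun x => φ x - ψ x) := by
  obtain ⟨c, rfl⟩ := hφ
  obtain ⟨d, rfl⟩ := hψ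
  exact ⟨c - d, funext fun x => by simp only [Pi.sub_apply, sub_mul, sum_sub_distrib]⟩

lemma intervalIntegrable_of_memLp_two (hab : a ≤ b) {g : ℝ → ℂ}
    (hg : MemLp g 2 (volume.restrict (Set.Ioc a b))) : IntervalIntegrable g volume a b :=
  (intervalIntegrable_iff_integrableOn_Ioc_of_le hab).2 (hg.integrable one_le_two)

lemma mul_sum_norm_sq_fourierCoeffOn_le (hab : a < b) {g : ℝ → ℂ}
    (hg : MemLp g 2 (volume.restrict (Set.Ioc a b))) :
    (b - a) * ∑ l ∈ idxSet N, ‖fourierCoeffOn a b g l‖ ^ 2 ≤ ∫ x in a..b, ‖g x‖ ^ 2 := by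
  set S := trigPoly a b N (fourierCoeffOn a b g)
  have hg1 := intervalIntegrable_of_memLp_two hab.le hg
  have hg2 : IntervalIntegrable (fun x => ‖g x‖ ^ 2) volume a b :=
    (intervalIntegrable_iff_integrableOn_Ioc_of_le hab.le).2 (hg.integrable_norm_pow two_ne_zero)
  have hgS : IntervalIntegrable (fun x => g x * conj (S x)) volume a b :=
    hg1.mul_continuousOn (by fun_prop)
  have hgSre : IntervalIntegrable (fun x => 2 * (g x * conj (S x)).re) volume a b :=
    IntervalIntegrable.const_mul ⟨hgS.1.re, hgS.2.re⟩ 2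
  have hcross : ∫ x in a..b, (g x * conj (S x)).re
      = (b - a) * ∑ l ∈ idxSet N, ‖fourierCoeffOn a b g l‖ ^ 2 := by
    simp only [← RCLike.re_to_complex]
    rw [intervalIntegral.intervalIntegral_re hgS, integral_mul_conj_trigPoly hab hg1]
    simp only [Complex.mul_conj', RCLike.re_to_complex]
    norm_cast
  have hexpand : ∀ x, ‖g x - S x‖ ^ 2 = ‖g x‖ ^ 2 - 2 * (g x * conj (S x)).re + ‖S x‖ ^ 2 :=
    fun x => by simp only [Complex.sq_norm, Complex.normSq_sub]; ring
  have hnonneg : 0 ≤ ∫ x in a..b, ‖g x - S x‖ ^ 2 :=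
    intervalIntegral.integral_nonneg hab.le fun x _ => sq_nonneg _
  simp only [hexpand] at hnonneg
  rw [intervalIntegral.integral_add (hg2.sub hgSre)
      (Continuous.intervalIntegrable (by fun_prop) _ _),
    intervalIntegral.integral_sub hg2 hgSre, intervalIntegral.integral_const_mul, hcross,
    integral_norm_sq_trigPoly hab] at hnonneg
  linarith

lemma fourierCoeffOn_sub {u u' : ℝ → ℂ} (hu : IntervalIntegrable u volume a b)
    (hu' : IntervalIntegrable u' volume a b) (l : ℤ) :
    fourierCoeffOn a b (fun x => u x - u' x) l
      = fourierCoeffOn a b u l - fourierCoeffOn a b u' l := by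
  simp only [fourierCoeffOn, sub_mul, ← mul_sub]
  rw [intervalIntegral.integral_sub (hu.mul_continuousOn (by fun_prop))
    (hu'.mul_continuousOn (by fun_prop))]

lemma freeFlow_sub {u u' : ℝ → ℂ} (hu : IntervalIntegrable u volume a b)
    (hu' : IntervalIntegrable u' volume a b) (s x : ℝ) :
    freeFlow a b N s u x - freeFlow a b N s u' x = freeFlow a b N s (fun y => u y - u' y) x := by
  simp only [freeFlow, ← sum_sub_distrib, fourierCoeffOn_sub hu hu']
  exact sum_congr rfl fun l _ => by ring

lemma integral_norm_sq_freeFlow_le (hab : a < b) (s : ℝ) {g : ℝ → ℂ}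
    (hg : MemLp g 2 (volume.restrict (Set.Ioc a b))) :
    ∫ x in a..b, ‖freeFlow a b N s g x‖ ^ 2 ≤ ∫ x in a..b, ‖g x‖ ^ 2 := by
  rw [freeFlow_eq_trigPoly, integral_norm_sq_trigPoly hab]
  simp only [norm_mul, norm_exp_neg_I_mul_ofReal, one_mul]
  exact mul_sum_norm_sq_fourierCoeffOn_le hab hg

lemma integral_norm_sq_freeFlow_sub_le (hab : a < b) (s : ℝ) {u u' : ℝ → ℂ}
    (hu : MemLp u 2 (volume.restrict (Set.Ioc a b)))
    (hu' : MemLp u' 2 (volume.restrict (Set.Ioc a b))) :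
    ∫ x in a..b, ‖freeFlow a b N s u x - freeFlow a b N s u' x‖ ^ 2
      ≤ ∫ x in a..b, ‖u x - u' x‖ ^ 2 := by
  simp only [freeFlow_sub (intervalIntegrable_of_memLp_two hab.le hu)
    (intervalIntegrable_of_memLp_two hab.le hu')]
  exact integral_norm_sq_freeFlow_le hab s (hu.sub hu')

lemma memLp_two_mul_of_norm_eq_one {E h : ℝ → ℂ} (hE : Measurable E) (hE1 : ∀ x, ‖E x‖ = 1)
    (hh : Continuous h) : MemLp (fun x => E x * h x) 2 (volume.restrict (Set.Ioc a b)) := by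
  obtain ⟨K, hK⟩ := isCompact_Icc.exists_bound_of_continuousOn (hh.continuousOn (s := Set.Icc a b))
  refine MemLp.of_bound (hE.mul hh.measurable).aestronglyMeasurable K
    (ae_restrict_of_forall_mem measurableSet_Ioc fun x hx => ?_)
  rw [norm_mul, hE1, one_mul]
  exact hK x (Set.Ioc_subset_Icc_self hx)

lemma interpN_sub (g g' : ℝ → ℂ) (x : ℝ) :
    interpN a b N g x - interpN a b N g' x = interpN a b N (fun y => g y - g' y) x := by
  simp only [interpN, discreteCoeff, ← sum_sub_distrib]
  exact sum_congr rfl fun l _ => by simp only [sub_mul, mul_sub, sum_sub_distrib]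

lemma gridPt_mem_Icc (hab : a ≤ b) {j : ℕ} (hj : j ≤ N) : gridPt a b N j ∈ Set.Icc a b := by
  rcases N.eq_zero_or_pos with rfl | hN
  · simp [gridPt, hab]
  have hstep : 0 ≤ (b - a) / N := div_nonneg (sub_nonneg.2 hab) N.cast_nonneg
  have hspan : (N : ℝ) * ((b - a) / N) = b - a := mul_div_cancel₀ _ (Nat.cast_ne_zero.2 hN.ne')
  have hjN := mul_le_mul_of_nonneg_right (Nat.cast_le.2 hj : (j : ℝ) ≤ N) hstep
  have := mul_nonneg j.cast_nonneg hstep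
  constructor <;> rw [gridPt] <;> linarith

lemma discreteNormSq_le_of_norm_le (hab : a ≤ b) {g h : ℝ → ℂ} {K : ℝ}
    (hgh : ∀ x ∈ Set.Icc a b, ‖g x‖ ≤ K * ‖h x‖) :
    discreteNormSq a b N g ≤ K ^ 2 * discreteNormSq a b N h := by
  rw [discreteNormSq, discreteNormSq, mul_left_comm]
  refine mul_le_mul_of_nonneg_left ?_ (div_nonneg (sub_nonneg.2 hab) N.cast_nonneg)
  rw [mul_sum]
  refine sum_le_sum fun j hj => ?_
  rw [← mul_pow]
  exact pow_le_pow_left₀ (norm_nonneg _)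
    (hgh _ (gridPt_mem_Icc hab (mem_range.1 hj).le)) 2

lemma norm_nlPhase_sub_le {β τ M : ℝ} (hτ : 0 ≤ τ) {v w : ℝ → ℂ} {x : ℝ} (hv : ‖v x‖ ≤ M)
    (hw : ‖w x‖ ≤ M) :
    ‖nlPhase β τ v x - nlPhase β τ w x‖ ≤ (1 + 2 * |β| * M ^ 2 * τ) * ‖v x - w x‖ := by
  set z := v x
  set z' := w x
  set s := τ * β * ‖z‖ ^ 2
  set t := τ * β * ‖z'‖ ^ 2
  have hsplit : nlPhase β τ v x - nlPhase β τ w x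
      = (z - z') * exp (-(I * s)) + z' * (exp (-(I * s)) - exp (-(I * t))) := by
    simp only [nlPhase]
    ring
  have hphase : |s - t| ≤ 2 * |β| * M * τ * ‖z - z'‖ := by
    have hdiff : s - t = τ * β * ((‖z‖ - ‖z'‖) * (‖z‖ + ‖z'‖)) := by ring
    rw [hdiff, abs_mul, abs_mul, abs_mul, abs_of_nonneg hτ,
      abs_of_nonneg (add_nonneg (norm_nonneg z) (norm_nonneg z'))]
    have := abs_norm_sub_norm_le z z'
    have : ‖z‖ + ‖z'‖ ≤ 2 * M := by linarith
    calc τ * |β| * (|‖z‖ - ‖z'‖| * (‖z‖ + ‖z'‖)) ≤ τ * |β| * (‖z - z'‖ * (2 * M)) := by gcongr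
      _ = 2 * |β| * M * τ * ‖z - z'‖ := by ring
  have hM : 0 ≤ M := (norm_nonneg z').trans hw
  calc ‖nlPhase β τ v x - nlPhase β τ w x‖
      ≤ ‖z - z'‖ + M * |s - t| := by
        rw [hsplit]
        refine (norm_add_le _ _).trans ?_
        rw [norm_mul, norm_mul, norm_exp_neg_I_mul_ofReal, mul_one]
        gcongr
        exact norm_exp_neg_I_mul_ofReal_sub_le s t
    _ ≤ ‖z - z'‖ + M * (2 * |β| * M * τ * ‖z - z'‖) := by gcongr
    _ = (1 + 2 * |β| * M ^ 2 * τ) * ‖z - z'‖ := by ring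

lemma sobNorm_zero (u : ℝ → ℂ) : sobNorm a b 0 u = √(∫ x in a..b, ‖u x‖ ^ 2) := by
  simp [sobNorm]

lemma integral_norm_sq_PhiLTeFP_sub_le (hab : a < b) (hN : N ≠ 0) {V : ℝ → ℝ} (hV : Measurable V)
    (β τ : ℝ) (v w : ℝ → ℂ) :
    ∫ x in a..b, ‖PhiLTeFP a b N V β τ v x - PhiLTeFP a b N V β τ w x‖ ^ 2
      ≤ discreteNormSq a b N (fun x => nlPhase β τ v x - nlPhase β τ w x) := by
  set E : ℝ → ℂ := fun x => exp (-(I * ((τ * V x : ℝ) : ℂ)))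
  have hE : Measurable E := by fun_prop
  have hE1 : ∀ x, ‖E x‖ = 1 := fun x => norm_exp_neg_I_mul_ofReal _
  calc _ ≤ ∫ x in a..b,
          ‖E x * interpN a b N (nlPhase β τ v) x - E x * interpN a b N (nlPhase β τ w) x‖ ^ 2 :=
        integral_norm_sq_freeFlow_sub_le hab τ
          (memLp_two_mul_of_norm_eq_one hE hE1 (continuous_interpN _))
          (memLp_two_mul_of_norm_eq_one hE hE1 (continuous_interpN _))
    _ = ∫ x in a..b, ‖interpN a b N (fun x => nlPhase β τ v x - nlPhase β τ w x) x‖ ^ 2 := by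
        simp only [← mul_sub, norm_mul, hE1, one_mul, interpN_sub]
    _ = _ := integral_norm_sq_interpN hab hN _

end GPE

open GPE in
theorem LTeFP_stability_L2_general
    (a b : ℝ) (hab : a < b) (β M : ℝ) :
    ∃ C > (0 : ℝ), ∀ V : ℝ → ℝ, Measurable V →
      ∀ N : ℕ, 0 < N → Even N →
      ∀ τ : ℝ, 0 < τ →
      ∀ v w : ℝ → ℂ, MemXN a b N v → MemXN a b N w →
        (∀ x ∈ Set.Icc a b, ‖v x‖ ≤ M) →
        (∀ x ∈ Set.Icc a b, ‖w x‖ ≤ M) →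
        sobNorm a b 0 (fun x => PhiLTeFP a b N V β τ v x - PhiLTeFP a b N V β τ w x)
          ≤ (1 + C * τ) * sobNorm a b 0 (fun x => v x - w x) := by
  refine ⟨2 * |β| * M ^ 2 + 1, by positivity, ?_⟩
  intro V hV N hN _ τ hτ v w hv hw hvM hwM
  set C := 2 * |β| * M ^ 2 + 1
  have hLip : ∀ x ∈ Set.Icc a b,
      ‖nlPhase β τ v x - nlPhase β τ w x‖ ≤ (1 + C * τ) * ‖v x - w x‖ := fun x hx =>
    (norm_nlPhase_sub_le hτ.le (hvM x hx) (hwM x hx)).trans (by gcongr; linarith)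
  have hL2 : ∫ x in a..b, ‖PhiLTeFP a b N V β τ v x - PhiLTeFP a b N V β τ w x‖ ^ 2
      ≤ (1 + C * τ) ^ 2 * ∫ x in a..b, ‖v x - w x‖ ^ 2 := calc
    _ ≤ discreteNormSq a b N (fun x => nlPhase β τ v x - nlPhase β τ w x) :=
        integral_norm_sq_PhiLTeFP_sub_le hab hN.ne' hV β τ v w
    _ ≤ (1 + C * τ) ^ 2 * discreteNormSq a b N (fun x => v x - w x) :=
        discreteNormSq_le_of_norm_le hab.le hLip
    _ = (1 + C * τ) ^ 2 * ∫ x in a..b, ‖v x - w x‖ ^ 2 := by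
        rw [(hv.sub hw).integral_norm_sq hab hN.ne']
  rw [sobNorm_zero, sobNorm_zero, ← Real.sqrt_sq (by positivity : 0 ≤ 1 + C * τ),
    ← Real.sqrt_mul (sq_nonneg _)]
  exact Real.sqrt_le_sqrt hL2

open GPE in
/-- L²-stability of the LTeFP flow: for any real-valued measurable potential V, any τ > 0
and trigonometric polynomials v, w ∈ X_N with L^∞-bound M,
‖Φ_τ(v) − Φ_τ(w)‖_{L²} ≤ (1 + Cτ)‖v − w‖_{L²}, with C depending only on β and M. -/
theorem LTeFP_stability_L2
    (a b : ℝ) (hab : a < b) (β M : ℝ) (hM : 0 < M) :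
    ∃ C > (0 : ℝ), ∀ V : ℝ → ℝ, Measurable V →
      ∀ N : ℕ, 0 < N → Even N →
      ∀ τ : ℝ, 0 < τ →
      ∀ v w : ℝ → ℂ, MemXN a b N v → MemXN a b N w →
        (∀ x ∈ Set.Icc a b, ‖v x‖ ≤ M) →
        (∀ x ∈ Set.Icc a b, ‖w x‖ ≤ M) →
        sobNorm a b 0 (fun x => PhiLTeFP a b N V β τ v x - PhiLTeFP a b N V β τ w x)
          ≤ (1 + C * τ) * sobNorm a b 0 (fun x => v x - w x) :=
  LTeFP_stability_L2_general a b hab β M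
end
end

section
/- Let β ∈ ℝ, M ≥ 0 and τ ≥ 0. Then for all complex numbers z, w with |z| ≤ M and |w| ≤ M, one has | z e^{−iτβ|z|²} − w e^{−iτβ|w|²} | ≤ (1 + 2|β|M²τ) |z − w|. -/
/-! Split `z e^{ia} - w e^{ib} = (z - w) e^{ia} + w (e^{ia} - e^{ib})`: the first term has norm
`‖z - w‖`, and since `θ ↦ e^{iθ}` is 1-Lipschitz the second is at most
`M |a - b| = M τ |β| |‖z‖² - ‖w‖²| ≤ 2 |β| M² τ ‖z - w‖`. -/

open Complex

theorem Complex.norm_exp_I_mul_ofReal_sub_exp_I_mul_ofReal_le (a b : ℝ) :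
    ‖exp (I * a) - exp (I * b)‖ ≤ |a - b| := by
  have hfactor : exp (I * a) - exp (I * b) = exp (I * b) * (exp (I * ↑(a - b)) - 1) := by
    rw [mul_sub, ← exp_add]; push_cast; ring_nf
  rw [hfactor, norm_mul, norm_exp_I_mul_ofReal, one_mul, ← Real.norm_eq_abs]
  exact Real.norm_exp_I_mul_ofReal_sub_one_le

theorem Complex.norm_mul_exp_I_mul_ofReal_sub_le (z w : ℂ) (a b : ℝ) :
    ‖z * exp (I * a) - w * exp (I * b)‖ ≤ ‖z - w‖ + ‖w‖ * |a - b| := by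
  have hsplit : z * exp (I * a) - w * exp (I * b)
      = (z - w) * exp (I * a) + w * (exp (I * a) - exp (I * b)) := by ring
  calc ‖z * exp (I * a) - w * exp (I * b)‖
      ≤ ‖z - w‖ * ‖exp (I * a)‖ + ‖w‖ * ‖exp (I * a) - exp (I * b)‖ := by
        rw [hsplit, ← norm_mul, ← norm_mul]; exact norm_add_le _ _
    _ ≤ ‖z - w‖ + ‖w‖ * |a - b| := by
        rw [norm_exp_I_mul_ofReal, mul_one]
        gcongr
        exact norm_exp_I_mul_ofReal_sub_exp_I_mul_ofReal_le a b

theorem abs_norm_sq_sub_norm_sq_le {E : Type*} [SeminormedAddCommGroup E] {M : ℝ} {x y : E}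
    (hx : ‖x‖ ≤ M) (hy : ‖y‖ ≤ M) : |‖x‖ ^ 2 - ‖y‖ ^ 2| ≤ 2 * M * ‖x - y‖ := by
  rw [sq_sub_sq, abs_mul, abs_of_nonneg (by positivity)]
  have hM : 0 ≤ M := (norm_nonneg x).trans hx
  gcongr
  · linarith
  · exact abs_norm_sub_norm_le x y

theorem nonlinear_phase_lipschitz_general (β M τ : ℝ) (hτ : 0 ≤ τ)
    (z w : ℂ) (hz : ‖z‖ ≤ M) (hw : ‖w‖ ≤ M) :
    ‖(z * Complex.exp (-(Complex.I * ((τ * β * ‖z‖ ^ 2 : ℝ) : ℂ)))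
          - w * Complex.exp (-(Complex.I * ((τ * β * ‖w‖ ^ 2 : ℝ) : ℂ))))‖
      ≤ (1 + 2 * |β| * M ^ 2 * τ) * ‖z - w‖ := by
  have hphase : ∀ θ : ℝ, -(I * (θ : ℂ)) = I * ↑(-θ) := fun θ => by push_cast; ring
  have hdiff : |-(τ * β * ‖z‖ ^ 2) - -(τ * β * ‖w‖ ^ 2)| ≤ τ * |β| * (2 * M * ‖z - w‖) := by
    rw [neg_sub_neg, ← mul_sub, abs_mul, abs_mul, abs_of_nonneg hτ, abs_sub_comm]
    gcongr
    exact abs_norm_sq_sub_norm_sq_le hz hw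
  rw [hphase, hphase]
  calc _ ≤ ‖z - w‖ + ‖w‖ * |-(τ * β * ‖z‖ ^ 2) - -(τ * β * ‖w‖ ^ 2)| :=
        norm_mul_exp_I_mul_ofReal_sub_le z w _ _
    _ ≤ ‖z - w‖ + M * (τ * |β| * (2 * M * ‖z - w‖)) := by gcongr; exact (norm_nonneg w).trans hw
    _ = (1 + 2 * |β| * M ^ 2 * τ) * ‖z - w‖ := by ring

/-- Pointwise Lipschitz estimate for the nonlinear phase map z ↦ z e^{−iτβ|z|²}:
for |z|, |w| ≤ M and τ ≥ 0,
|z e^{−iτβ|z|²} − w e^{−iτβ|w|²}| ≤ (1 + 2|β|M²τ)|z − w|. -/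
theorem nonlinear_phase_lipschitz (β M τ : ℝ) (hM : 0 ≤ M) (hτ : 0 ≤ τ)
    (z w : ℂ) (hz : ‖z‖ ≤ M) (hw : ‖w‖ ≤ M) :
    ‖(z * Complex.exp (-(Complex.I * ((τ * β * ‖z‖ ^ 2 : ℝ) : ℂ)))
          - w * Complex.exp (-(Complex.I * ((τ * β * ‖w‖ ^ 2 : ℝ) : ℂ))))‖
      ≤ (1 + 2 * |β| * M ^ 2 * τ) * ‖z - w‖ :=
  nonlinear_phase_lipschitz_general β M τ hτ z w hz hw
end
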